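/- arXiv:2104.07197 — 4 statements merged into one kernel-verified Lean document; each statement's English description precedes it below -/
import Mathlib

section
/- Suppose w_1,...,w_{n−1} is a palindrome (w_i = w_{n−i} for i = 1,...,n−1) of real numbers, n odd, n = 2k+1. Then Q_n = (Q_{k+1} − Q_k)(Q_{k+1} + Q_k), where all continuants are evaluated at (w_1, w_2, ...). -/
/-- The signed continuant polynomials: `contQ w t = Q_t(w_1,…,w_{t-1})`,
with `Q_{-1} = -1`, `Q_0 = 0`, `Q_{t+1} = w_t Q_t - Q_{t-1}` (so `Q_1 = 1`). -/
def contQ (w : ℕ → ℝ) : ℕ → ℝ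
  | 0 => 0
  | 1 => 1
  | (t+2) => w (t+1) * contQ w (t+1) - contQ w t

/-! Splitting the recurrence at position `m` expresses `Q_{m+t+1}` through `Q_{m+1}`, `Q_m` and
the continuants of the two shifted tails of `w`. Continuants are invariant under reversing the
sequence, so for a palindrome of length `2k` both tails, read backwards, are initial segments of `w`
itself; splitting at `m = k` then gives `Q_{2k+1} = Q_{k+1}^2 - Q_k^2`. -/

theorem contQ_add_two (w : ℕ → ℝ) (t : ℕ) :
    contQ w (t + 2) = w (t + 1) * contQ w (t + 1) - contQ w t := rfl

theorem contQ_add (w : ℕ → ℝ) (m : ℕ) : ∀ t : ℕ,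
    contQ w (m + t + 1) =
      contQ w (m + 1) * contQ (fun i => w (m + i)) (t + 1)
        - contQ w m * contQ (fun i => w (m + 1 + i)) t
  | 0 => by simp [contQ]
  | 1 => by
      rw [show m + 1 + 1 = m + 2 by omega, contQ_add_two]
      simp [contQ, mul_comm]
  | t + 2 => by
      have ih₁ : contQ w (m + t + 2) = contQ w (m + 1) * contQ (fun i => w (m + i)) (t + 2)
          - contQ w m * contQ (fun i => w (m + 1 + i)) (t + 1) := contQ_add w m (t + 1)
      have ih₀ := contQ_add w m t
      rw [show m + (t + 2) + 1 = m + t + 1 + 2 by omega, contQ_add_two, ih₁, ih₀,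
        contQ_add_two (fun i => w (m + i)) (t + 1), contQ_add_two (fun i => w (m + 1 + i)) t]
      ring_nf

theorem contQ_congr {v v' : ℕ → ℝ} : ∀ {n : ℕ},
    (∀ i, 1 ≤ i → i < n → v i = v' i) → contQ v n = contQ v' n
  | 0, _ => rfl
  | 1, _ => rfl
  | n + 2, h => by
      rw [contQ_add_two, contQ_add_two, h (n + 1) (by omega) (by omega),
        contQ_congr fun i hi hin => h i hi (by omega),
        contQ_congr fun i hi hin => h i hi (by omega)]

theorem contQ_reverse (v : ℕ → ℝ) : ∀ n : ℕ,
    contQ (fun i => v (n - i)) n = contQ v n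
  | 0 => rfl
  | 1 => rfl
  | n + 2 => by
      have shift₁ : (fun i => v (n + 2 - (1 + i))) = fun i => v (n + 1 - i) := by
        funext i; congr 1; omega
      have shift₂ : (fun i => v (n + 2 - (1 + 1 + i))) = fun i => v (n - i) := by
        funext i; congr 1; omega
      have h := contQ_add (fun i => v (n + 2 - i)) 1 n
      rw [show 1 + n + 1 = n + 2 by omega, shift₁, shift₂, contQ_reverse v (n + 1),
        contQ_reverse v n] at h
      rw [h, contQ_add_two v]
      simp [contQ, mul_comm]

theorem contQ_shift_of_palindrome (w : ℕ → ℝ) (m n : ℕ)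
    (hpal : ∀ i, 1 ≤ i → i < n → w (m + n - i) = w i) :
    contQ (fun i => w (m + i)) n = contQ w n := by
  rw [← contQ_reverse]
  exact contQ_congr fun i hi hin => by
    simpa [show m + (n - i) = m + n - i by omega] using hpal i hi hin

/-- If `w_1,…,w_{n-1}` is a palindrome and `n = 2k+1` is odd, then
`Q_n = (Q_{k+1} - Q_k)(Q_{k+1} + Q_k)`. -/
theorem contQ_factor_odd (w : ℕ → ℝ) (k : ℕ)
    (hpal : ∀ i, 1 ≤ i → i ≤ 2 * k + 1 - 1 → w i = w (2 * k + 1 - i)) :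
    contQ w (2 * k + 1) =
      (contQ w (k + 1) - contQ w k) * (contQ w (k + 1) + contQ w k) := by
  have hpal_split : ∀ m n, m + n = 2 * k + 1 → ∀ i, 1 ≤ i → i < n → w (m + n - i) = w i :=
    fun m n hmn i hi hin => by rw [hmn]; exact (hpal i hi (by omega)).symm
  rw [two_mul, contQ_add, contQ_shift_of_palindrome w k (k + 1) (hpal_split _ _ (by ring)),
    contQ_shift_of_palindrome w (k + 1) k (hpal_split _ _ (by ring))]
  ring
end

section
/- Let w_1,...,w_{n−1} be a palindrome of real numbers with n = 2k+1 odd, and let C = Q_{k+1} − Q_k. Then for each t with k ≤ t ≤ n, the difference Q_{n−t} − Q_t is divisible by C; specifically Q_{n−t} − Q_t = C · S_t where S_k = 1, S_{k+1} = −1, and S_{t+1} = w_t S_t − S_{t−1}. -/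
/-!
Both `t ↦ Q_t` and, by the palindrome condition, `t ↦ Q_{n-t}` satisfy the continuant recurrence
`X_{t+1} = w_t X_t - X_{t-1}` for `0 < t < n`, hence so does their difference `D_t = Q_{n-t} - Q_t`.
For `n = 2k+1` one has `D_k = Q_{k+1} - Q_k = C` and `D_{k+1} = -C`, so `D` and `C · S` are
solutions of the same second-order recurrence with the same values at `k` and `k+1`, and therefore
agree on `[k, n]`.
-/

def ContinuantRecOn {R : Type*} [CommRing R] (a : ℕ → R) (k N : ℕ) (X : ℕ → R) : Prop :=
  ∀ t, k + 1 ≤ t → t < N → X (t + 1) = a t * X t - X (t - 1)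

namespace ContinuantRecOn

variable {R : Type*} [CommRing R] {a : ℕ → R} {k N : ℕ} {X Y : ℕ → R}

theorem mono {k' N' : ℕ} (h : ContinuantRecOn a k N X) (hk : k ≤ k') (hN : N' ≤ N) :
    ContinuantRecOn a k' N' X :=
  fun t hkt htN => h t (by omega) (by omega)

theorem sub (hX : ContinuantRecOn a k N X) (hY : ContinuantRecOn a k N Y) :
    ContinuantRecOn a k N (fun t => X t - Y t) := by
  intro t hkt htN
  linear_combination hX t hkt htN - hY t hkt htN

theorem const_mul (hX : ContinuantRecOn a k N X) (c : R) :
    ContinuantRecOn a k N (fun t => c * X t) := by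
  intro t hkt htN
  linear_combination c * hX t hkt htN

theorem eq_of_eq_of_eq (hX : ContinuantRecOn a k N X) (hY : ContinuantRecOn a k N Y)
    (h₀ : X k = Y k) (h₁ : X (k + 1) = Y (k + 1)) : ∀ t, k ≤ t → t ≤ N → X t = Y t := by
  intro t
  induction t using Nat.strong_induction_on with
  | _ t ih =>
    intro hkt htN
    rcases Nat.lt_or_ge t (k + 2) with hlt | hge
    · obtain rfl | rfl : t = k ∨ t = k + 1 := by omega
      exacts [h₀, h₁]
    · obtain ⟨s, rfl⟩ : ∃ s, t = s + 2 := ⟨t - 2, by omega⟩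
      rw [hX (s + 1) (by omega) (by omega), hY (s + 1) (by omega) (by omega), Nat.add_sub_cancel,
        ih (s + 1) (by omega) (by omega) (by omega), ih s (by omega) (by omega) (by omega)]

end ContinuantRecOn

theorem contQ_continuantRecOn (w : ℕ → ℝ) (N : ℕ) : ContinuantRecOn w 0 N (contQ w) := by
  intro t ht _
  obtain ⟨s, rfl⟩ : ∃ s, t = s + 1 := ⟨t - 1, by omega⟩
  rfl

theorem contQ_sub_continuantRecOn_of_palindrome (w : ℕ → ℝ) (n : ℕ)
    (hpal : ∀ i, 1 ≤ i → i ≤ n - 1 → w i = w (n - i)) :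
    ContinuantRecOn w 0 n (fun t => contQ w (n - t)) := by
  intro t ht htn
  obtain ⟨m, hm⟩ : ∃ m, n - (t + 1) = m := ⟨_, rfl⟩
  have hw : w (m + 1) = w t := by rw [hpal t ht (by omega)]; congr 1; omega
  have hrec : contQ w (m + 2) = w (m + 1) * contQ w (m + 1) - contQ w m := rfl
  simp only [hm, show n - t = m + 1 by omega, show n - (t - 1) = m + 2 by omega]
  linear_combination hrec + contQ w (m + 1) * hw

/-- Odd palindromic case `n = 2k+1`, `C = Q_{k+1} - Q_k`: for `k ≤ t ≤ n`,
`Q_{n-t} - Q_t = C · S_t`, where `S_k = 1`, `S_{k+1} = -1`,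
`S_{t+1} = w_t S_t - S_{t-1}`. -/
theorem contQ_symmetry_odd (w : ℕ → ℝ) (k : ℕ) (S : ℕ → ℝ)
    (hpal : ∀ i, 1 ≤ i → i ≤ 2 * k + 1 - 1 → w i = w (2 * k + 1 - i))
    (hSk : S k = 1) (hSk1 : S (k + 1) = -1)
    (hSrec : ∀ t, k + 1 ≤ t → S (t + 1) = w t * S t - S (t - 1)) :
    ∀ t, k ≤ t → t ≤ 2 * k + 1 →
      contQ w (2 * k + 1 - t) - contQ w t =
        (contQ w (k + 1) - contQ w k) * S t := by
  have hD : ContinuantRecOn w k (2 * k + 1) (fun t => contQ w (2 * k + 1 - t) - contQ w t) :=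
    ((contQ_sub_continuantRecOn_of_palindrome w _ hpal).sub
      (contQ_continuantRecOn w _)).mono (Nat.zero_le k) le_rfl
  have hCS : ContinuantRecOn w k (2 * k + 1) (fun t => (contQ w (k + 1) - contQ w k) * S t) :=
    ContinuantRecOn.const_mul (fun t hkt _ => hSrec t hkt) _
  refine hD.eq_of_eq_of_eq hCS ?_ ?_
  · simp only [show 2 * k + 1 - k = k + 1 by omega, hSk, mul_one]
  · simp only [show 2 * k + 1 - (k + 1) = k by omega, hSk1]
    ring
end

section
/- Let w_1,...,w_{n−1} be a palindrome of real numbers with n = 2k even, and let C = Q_{k+1} − Q_{k−1}. Then for each t with k ≤ t ≤ n, Q_{n−t} − Q_t = C · S_t where S_k = 0, S_{k+1} = −1, and S_{t+1} = w_t S_t − S_{t−1}. -/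
theorem eqOn_Icc_of_recurrence {α : Type*} {a b : ℕ → α} (f : ℕ → α → α → α) {k N : ℕ}
    (h₀ : a k = b k) (h₁ : a (k + 1) = b (k + 1))
    (ha : ∀ t, k ≤ t → t + 2 ≤ N → a (t + 2) = f t (a (t + 1)) (a t))
    (hb : ∀ t, k ≤ t → t + 2 ≤ N → b (t + 2) = f t (b (t + 1)) (b t)) :
    Set.EqOn a b (Set.Icc k N) := by
  suffices h : ∀ d, k + d ≤ N → a (k + d) = b (k + d) by
    rintro t ⟨hkt, htN⟩
    obtain ⟨d, rfl⟩ := Nat.exists_eq_add_of_le hkt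
    exact h d htN
  intro d
  induction d using Nat.twoStepInduction with
  | zero => exact fun _ => h₀
  | one => exact fun _ => h₁
  | more d ih₀ ih₁ =>
    intro hd
    rw [← add_assoc, ha _ (by omega) (by omega), hb _ (by omega) (by omega), add_assoc,
      ih₁ (by omega), ih₀ (by omega)]

theorem contQ_sub_add_two (w : ℕ → ℝ) {n t : ℕ} (h : t + 2 ≤ n) :
    contQ w (n - (t + 2)) = w (n - (t + 1)) * contQ w (n - (t + 1)) - contQ w (n - t) := by
  obtain ⟨m, rfl⟩ := Nat.exists_eq_add_of_le h
  have hm₁ : t + 2 + m - (t + 1) = m + 1 := by omega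
  have hm₂ : t + 2 + m - t = m + 2 := by omega
  rw [hm₁, hm₂, contQ_add_two, Nat.add_sub_cancel_left]
  ring

theorem contQ_symmetry_even_general (w : ℕ → ℝ) (k : ℕ) (S : ℕ → ℝ)
    (hpal : ∀ i, 1 ≤ i → i ≤ 2 * k - 1 → w i = w (2 * k - i))
    (hSk : S k = 0) (hSk1 : S (k + 1) = -1)
    (hSrec : ∀ t, k + 1 ≤ t → S (t + 1) = w t * S t - S (t - 1)) :
    ∀ t, k ≤ t → t ≤ 2 * k →
      contQ w (2 * k - t) - contQ w t =
        (contQ w (k + 1) - contQ w (k - 1)) * S t := by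
  set C := contQ w (k + 1) - contQ w (k - 1)
  have hD : Set.EqOn (fun t => contQ w (2 * k - t) - contQ w t) (fun t => C * S t)
      (Set.Icc k (2 * k)) := by
    refine eqOn_Icc_of_recurrence (fun t x y => w (t + 1) * x - y) ?_ ?_ ?_ ?_
    · simp [two_mul, hSk]
    · rw [show 2 * k - (k + 1) = k - 1 by omega, hSk1]
      ring
    · intro t _ ht
      rw [contQ_sub_add_two w ht, contQ_add_two, hpal (t + 1) (by omega) (by omega)]
      ring
    · intro t hkt _
      rw [hSrec (t + 1) (by omega), Nat.add_sub_cancel]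
      ring
  exact fun t hkt htn => hD ⟨hkt, htn⟩

/-- Even palindromic case `n = 2k`, `C = Q_{k+1} - Q_{k-1}`: for `k ≤ t ≤ n`,
`Q_{n-t} - Q_t = C · S_t`, where `S_k = 0`, `S_{k+1} = -1`,
`S_{t+1} = w_t S_t - S_{t-1}`. -/
theorem contQ_symmetry_even (w : ℕ → ℝ) (k : ℕ) (hk : 1 ≤ k) (S : ℕ → ℝ)
    (hpal : ∀ i, 1 ≤ i → i ≤ 2 * k - 1 → w i = w (2 * k - i))
    (hSk : S k = 0) (hSk1 : S (k + 1) = -1)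
    (hSrec : ∀ t, k + 1 ≤ t → S (t + 1) = w t * S t - S (t - 1)) :
    ∀ t, k ≤ t → t ≤ 2 * k →
      contQ w (2 * k - t) - contQ w t =
        (contQ w (k + 1) - contQ w (k - 1)) * S t :=
  contQ_symmetry_even_general w k S hpal hSk hSk1 hSrec
end

section
/- Let the 2×2 matrix M = M_{[w]} correspond to a word w = w_0 ... w_{n−1} whose reduced word w_1...w_{n−1} is a palindrome, and suppose the parameters satisfy C = 0 (where C = Q_{k+1} − Q_k for n = 2k+1 odd, or C = Q_{k+1} − Q_{k−1} for n = 2k even). Then M ≡ [[−1, 0], [w_0 − Q_{n−2}(w_2,...,w_{n−2}), −1]], i.e., M is lower triangular with both diagonal entries equal to −1. -/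
/-- The companion-type matrix `M_x = [[x, -1], [1, 0]]`. -/
def Mx (x : ℝ) : Matrix (Fin 2) (Fin 2) ℝ := !![x, -1; 1, 0]

/-- `Mword w n = M_{w_{n-1}} ⋯ M_{w_1} M_{w_0}` (rightmost factor first). -/
def Mword (w : ℕ → ℝ) : ℕ → Matrix (Fin 2) (Fin 2) ℝ
  | 0 => 1
  | (t+1) => Mx (w t) * Mword w t

/-! Split the palindromic reduced word as `u = v x vʳ`, with `|v| = m` and a middle block `x` of
length `c ∈ {0, 1}`. Reversing a word conjugates the transpose of its product by
`D = diag(1, -1)`, so `M_[u] = D M_[v]ᵀ D M_[v x]`. The first column of `M_[w_1 … w_t]` is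
`(Q_{t+1}, Q_t)`, and `C = 0` says exactly that `D M_[v x] e₀ = J M_[v] e₀` for
`J = [[0, 1], [-1, 0]]`. Since `Lᵀ J L = det L • J` and every `M_x` has determinant one, the first
column of `M_[u]` is `D J e₀ = (0, 1)`, i.e. `Q_n = 0` and `Q_{n-1} = 1`. The determinant then pins
down the second column, and multiplying by `M_{w_0}` gives the claimed matrix. -/

open Matrix

def signDiag : Matrix (Fin 2) (Fin 2) ℝ := !![1, 0; 0, -1]

def sympJ {R : Type*} [CommRing R] : Matrix (Fin 2) (Fin 2) R := !![0, 1; -1, 0]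

theorem transpose_mul_sympJ_mul {R : Type*} [CommRing R] (L : Matrix (Fin 2) (Fin 2) R) :
    Lᵀ * sympJ * L = L.det • sympJ := by
  ext i j
  fin_cases i <;> fin_cases j <;> simp [sympJ, mul_apply, Fin.sum_univ_two, det_fin_two] <;> ring

theorem signDiag_mul_signDiag : signDiag * signDiag = 1 := by
  simp [signDiag, one_fin_two]

theorem signDiag_mul_transpose_Mx_mul_signDiag (x : ℝ) :
    signDiag * (Mx x)ᵀ * signDiag = Mx x := by
  rw [eta_fin_two (Mx x)ᵀ]
  simp [signDiag, Mx]

theorem det_Mword (w : ℕ → ℝ) (n : ℕ) : (Mword w n).det = 1 := by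
  induction n with
  | zero => simp [Mword]
  | succ t ih => rw [Mword, det_mul, ih, mul_one, Mx, det_fin_two_of]; ring

theorem Mword_congr {u w : ℕ → ℝ} {n : ℕ} (h : ∀ i < n, u i = w i) : Mword u n = Mword w n := by
  induction n with
  | zero => rfl
  | succ t ih =>
    simp only [Mword, h t t.lt_succ_self, ih fun i hi => h i (hi.trans t.lt_succ_self)]

theorem Mword_add (w : ℕ → ℝ) (a b : ℕ) :
    Mword w (a + b) = Mword (fun i => w (i + b)) a * Mword w b := by
  induction a with
  | zero => simp [Mword]
  | succ t ih => rw [Nat.add_right_comm, Mword, Mword, ih, mul_assoc]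

theorem Mword_succ' (w : ℕ → ℝ) (t : ℕ) :
    Mword w (t + 1) = Mword (fun i => w (i + 1)) t * Mx (w 0) := by
  rw [Mword_add w t 1, Mword, Mword, mul_one]

theorem Mword_reverse (w : ℕ → ℝ) (n : ℕ) :
    Mword (fun i => w (n - 1 - i)) n = signDiag * (Mword w n)ᵀ * signDiag := by
  induction n with
  | zero => simp [Mword, signDiag_mul_signDiag]
  | succ n ih =>
    have hshift : (fun i => w (n + 1 - 1 - (i + 1))) = fun i => w (n - 1 - i) := by
      funext i; congr 1; omega
    rw [Mword_succ', hshift, ih, Nat.add_sub_cancel, Nat.sub_zero,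
      ← signDiag_mul_transpose_Mx_mul_signDiag (w n), Mword, transpose_mul]
    simp only [mul_assoc, ← mul_assoc signDiag signDiag, signDiag_mul_signDiag, one_mul]

theorem Mword_palindrome (u : ℕ → ℝ) (m c : ℕ)
    (hpal : ∀ i < 2 * m + c, u i = u (2 * m + c - 1 - i)) :
    Mword u (m + (c + m)) = signDiag * (Mword u m)ᵀ * signDiag * Mword u (c + m) := by
  rw [Mword_add, ← Mword_reverse]
  congr 1
  exact Mword_congr fun i hi => by rw [hpal _ (by omega)]; congr 1; omega

theorem Mword_shift_mulVec_one_zero (w : ℕ → ℝ) (t : ℕ) :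
    Mword (fun i => w (i + 1)) t *ᵥ ![1, 0] = ![contQ w (t + 1), contQ w t] := by
  induction t with
  | zero => simp [Mword, contQ]
  | succ t ih =>
    rw [Mword, ← mulVec_mulVec, ih, contQ, Mx, mulVec_fin_two]
    simp [sub_eq_add_neg]

theorem signDiag_conj_transpose_mul_mulVec_one_zero (L R : Matrix (Fin 2) (Fin 2) ℝ)
    (hL : L.det = 1)
    (h : signDiag *ᵥ (R *ᵥ ![1, 0]) = sympJ *ᵥ (L *ᵥ ![1, 0])) :
    (signDiag * Lᵀ * signDiag * R) *ᵥ ![1, 0] = ![0, 1] := by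
  rw [← mulVec_mulVec, ← mulVec_mulVec, h, mulVec_mulVec, mulVec_mulVec, mul_assoc signDiag Lᵀ,
    mul_assoc signDiag, transpose_mul_sympJ_mul, hL, one_smul]
  rw [mulVec_fin_two]
  simp [signDiag, sympJ]

theorem contQ_eq_zero_and_eq_one_of_palindrome (w : ℕ → ℝ) (m c : ℕ)
    (hpal : ∀ i, 1 ≤ i → i ≤ 2 * m + c → w i = w (2 * m + c + 1 - i))
    (hmid₁ : contQ w (m + c + 1) = contQ w m) (hmid₂ : contQ w (m + c) = contQ w (m + 1)) :
    contQ w (2 * m + c + 1) = 0 ∧ contQ w (2 * m + c) = 1 := by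
  set u : ℕ → ℝ := fun i => w (i + 1)
  have hP := Mword_palindrome u m c fun i hi => by
    simp only [u]; rw [hpal (i + 1) (by omega) (by omega)]; congr 1; omega
  have hmid : signDiag *ᵥ (Mword u (c + m) *ᵥ ![1, 0]) = sympJ *ᵥ (Mword u m *ᵥ ![1, 0]) := by
    rw [Mword_shift_mulVec_one_zero, Mword_shift_mulVec_one_zero, Nat.add_comm c m, hmid₁, hmid₂,
      mulVec_fin_two, mulVec_fin_two]
    simp [signDiag, sympJ]
  have hcol := signDiag_conj_transpose_mul_mulVec_one_zero _ _ (det_Mword u m) hmid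
  rw [← hP, Mword_shift_mulVec_one_zero, show m + (c + m) = 2 * m + c by omega] at hcol
  exact ⟨congrFun hcol 0, congrFun hcol 1⟩

theorem Mword_shift_succ (w : ℕ → ℝ) (t : ℕ) :
    Mword (fun i => w (i + 1)) (t + 1) =
      !![contQ w (t + 2), -contQ (fun i => w (i + 1)) (t + 1);
         contQ w (t + 1), -contQ (fun i => w (i + 1)) t] := by
  have hcol₀ := Mword_shift_mulVec_one_zero w (t + 1)
  have hcol₁ : Mword (fun i => w (i + 1)) (t + 1) *ᵥ ![0, 1] =
      -![contQ (fun i => w (i + 1)) (t + 1), contQ (fun i => w (i + 1)) t] := by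
    rw [Mword_succ', ← mulVec_mulVec, ← Mword_shift_mulVec_one_zero (fun i => w (i + 1)) t,
      ← mulVec_neg]
    congr 1
    rw [Mx, mulVec_fin_two]
    simp
  rw [mulVec_fin_two] at hcol₀ hcol₁
  simp only [Fin.isValue, cons_val_zero, cons_val_one, cons_val_fin_one, mul_one, mul_zero,
    add_zero, zero_add, neg_cons, neg_empty, vecCons_inj, and_true] at hcol₀ hcol₁
  rw [eta_fin_two (Mword _ (t + 1))]
  simp [hcol₀, hcol₁]

theorem Mword_eq_of_contQ (w : ℕ → ℝ) {n : ℕ} (hn : 2 ≤ n) (h₀ : contQ w n = 0)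
    (h₁ : contQ w (n - 1) = 1) :
    Mword w n = !![-1, 0; w 0 - contQ (fun i => w (i + 1)) (n - 2), -1] := by
  obtain ⟨m, rfl⟩ : ∃ m, n = m + 2 := ⟨n - 2, by omega⟩
  rw [show m + 2 - 1 = m + 1 by omega] at h₁
  have hsym : contQ (fun i => w (i + 1)) (m + 1) = 1 := by
    have hdet := det_Mword (fun i => w (i + 1)) (m + 1)
    rw [Mword_shift_succ, h₀, h₁, det_fin_two_of] at hdet
    linarith
  rw [Mword_succ', Mword_shift_succ, h₀, h₁, hsym, Mx, mul_fin_two, Nat.add_sub_cancel]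
  simp [sub_eq_add_neg]

/-- If the reduced word `w_1 … w_{n-1}` is a palindrome and the parameters lie on
the critical curve `C = 0` (`C = Q_{k+1} - Q_k` for `n = 2k+1` odd,
`C = Q_{k+1} - Q_{k-1}` for `n = 2k` even), then
`M_{[w]} = [[-1, 0], [w_0 - Q_{n-2}(w_2,…,w_{n-2}), -1]]`. -/
theorem Mword_on_critical_curve (w : ℕ → ℝ) (n k : ℕ) (hn2 : 2 ≤ n)
    (hparity : n = 2 * k + 1 ∨ (n = 2 * k ∧ 1 ≤ k))
    (hpal : ∀ i, 1 ≤ i → i ≤ n - 1 → w i = w (n - i))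
    (hCodd : n = 2 * k + 1 → contQ w (k + 1) - contQ w k = 0)
    (hCeven : n = 2 * k → contQ w (k + 1) - contQ w (k - 1) = 0) :
    Mword w n =
      !![-1, 0;
         w 0 - contQ (fun i => w (i + 1)) (n - 2), -1] := by
  obtain ⟨m, c, rfl, hmid₁, hmid₂⟩ : ∃ m c, n = 2 * m + c + 1 ∧
      contQ w (m + c + 1) = contQ w m ∧ contQ w (m + c) = contQ w (m + 1) := by
    rcases hparity with hodd | ⟨heven, hk⟩
    · have hC := hCodd hodd
      exact ⟨k, 0, hodd, by linarith, by rw [Nat.add_zero]; linarith⟩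
    · have hC := hCeven heven
      refine ⟨k - 1, 1, by omega, ?_, rfl⟩
      rw [show k - 1 + 1 + 1 = k + 1 by omega]
      linarith
  obtain ⟨h₀, h₁⟩ :=
    contQ_eq_zero_and_eq_one_of_palindrome w m c (by simpa using hpal) hmid₁ hmid₂
  exact Mword_eq_of_contQ w hn2 h₀ (by simpa using h₁)
end
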